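/- Let Γ be a finite connected simple graph, viewed as a subgraph of its extension graph Γ^e. Then for all vertices x, y of Γ and all group elements g, h ∈ A(Γ), the distance in Γ between x and y is at most the distance in Γ^e between x^g and y^h. In particular, a geodesic path lying in Γ is also a geodesic in Γ^e. -/

import Mathlib

/-!
Label each vertex `v^g` of `Γ^e` by `v`; this is well defined because conjugation is trivial in
the abelianization of `A(Γ)`. If conjugates `u^g`, `v^h` with `u ≠ v` commute, then `u` and `v`
are adjacent in `Γ`: otherwise `A(Γ) → S₃`, sending `u` to a transposition, `v` to a `3`-cycle and
the other generators to `1`, would make a conjugate of a transposition commute with a conjugate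
of a `3`-cycle. So labelling maps each path of `Γ^e` to a path of `Γ` that is no longer.

This bounds `Γ.dist x y` by the distance of `x^g` and `y^h` only once they are joined by a path
(`SimpleGraph.dist` is `0` across components). `Γ^e` is connected: each copy `Γ^g` is, and
`Γ^g`, `Γ^{s^{±1} g}` share the vertex `s^g`. The reverse inequality for `g = h = 1` comes from
`Γ ⊆ Γ^e`.
-/

/-- The commutation relations defining the right-angled Artin group of a graph `Γ`. -/
def raagRels {V : Type*} (Γ : SimpleGraph V) : Set (FreeGroup V) :=
  {w | ∃ u v : V, Γ.Adj u v ∧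
    w = FreeGroup.of u * FreeGroup.of v * (FreeGroup.of u)⁻¹ * (FreeGroup.of v)⁻¹}

/-- The right-angled Artin group `A(Γ)` of a graph `Γ`. -/
abbrev Raag {V : Type*} (Γ : SimpleGraph V) := PresentedGroup (raagRels Γ)

/-- The generator of `A(Γ)` corresponding to a vertex `v`. -/
def raagGen {V : Type*} (Γ : SimpleGraph V) (v : V) : Raag Γ := PresentedGroup.of v

/-- The vertex set of the extension graph `Γ^e`: all conjugates `v^g = g⁻¹ v g` of vertex
generators in `A(Γ)`. -/
def extVerts {V : Type*} (Γ : SimpleGraph V) : Set (Raag Γ) :=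
  {a | ∃ (v : V) (g : Raag Γ), a = g⁻¹ * raagGen Γ v * g}

/-- The extension graph `Γ^e`: two distinct conjugates of vertex generators are adjacent iff they
commute in `A(Γ)`. -/
def extGraph {V : Type*} (Γ : SimpleGraph V) : SimpleGraph (extVerts Γ) where
  Adj x y := x ≠ y ∧ Commute (x : Raag Γ) (y : Raag Γ)
  symm := by constructor; rintro x y ⟨h1, h2⟩; exact ⟨h1.symm, h2.symm⟩
  loopless := by constructor; rintro x ⟨h1, _⟩; exact h1 rfl

namespace SimpleGraph

variable {V W : Type*} {G : SimpleGraph V} {H : SimpleGraph W} {f : V → W}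

lemma Walk.exists_length_le_of_eq_or_adj (hf : ∀ a b, G.Adj a b → f a = f b ∨ H.Adj (f a) (f b))
    {u v : V} (p : G.Walk u v) : ∃ q : H.Walk (f u) (f v), q.length ≤ p.length := by
  induction p with
  | nil => exact ⟨.nil, le_rfl⟩
  | cons hadj _ ih =>
    obtain ⟨q, hq⟩ := ih
    rcases hf _ _ hadj with heq | hadj'
    · exact ⟨q.copy heq.symm rfl, by simp only [Walk.length_copy, Walk.length_cons]; omega⟩
    · exact ⟨.cons hadj' q, by simp only [Walk.length_cons]; omega⟩

lemma dist_map_le_of_eq_or_adj (hf : ∀ a b, G.Adj a b → f a = f b ∨ H.Adj (f a) (f b))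
    {u v : V} (huv : G.Reachable u v) : H.dist (f u) (f v) ≤ G.dist u v := by
  obtain ⟨p, hp⟩ := huv.exists_walk_length_eq_dist
  obtain ⟨q, hq⟩ := p.exists_length_le_of_eq_or_adj hf
  exact (dist_le q).trans (hp ▸ hq)

end SimpleGraph

section Raag

variable {V : Type*} (Γ : SimpleGraph V)

def raagLift {G : Type*} [Group G] (f : V → G) (hf : ∀ a b, Γ.Adj a b → Commute (f a) (f b)) :
    Raag Γ →* G :=
  PresentedGroup.toGroup (f := f) <| by
    rintro r ⟨a, b, hab, rfl⟩
    simp only [map_mul, map_inv, FreeGroup.lift_apply_of]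
    rw [mul_inv_eq_one, mul_inv_eq_iff_eq_mul, (hf a b hab).eq]

@[simp]
lemma raagLift_raagGen {G : Type*} [Group G] (f : V → G)
    (hf : ∀ a b, Γ.Adj a b → Commute (f a) (f b)) (v : V) :
    raagLift Γ f hf (raagGen Γ v) = f v :=
  PresentedGroup.toGroup.of _

lemma raagGen_commute {u v : V} (h : Γ.Adj u v) : Commute (raagGen Γ u) (raagGen Γ v) := by
  have hrel : PresentedGroup.mk (raagRels Γ)
      (FreeGroup.of u * FreeGroup.of v * (FreeGroup.of u)⁻¹ * (FreeGroup.of v)⁻¹) = 1 :=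
    PresentedGroup.mk_eq_one_iff.mpr (Subgroup.subset_normalClosure ⟨u, v, h, rfl⟩)
  simp only [map_mul, map_inv] at hrel
  rwa [mul_inv_eq_one, mul_inv_eq_iff_eq_mul] at hrel

-- Conjugation is trivial in the abelianization `ℤ^V`.
lemma eq_of_conj_raagGen_eq {u v : V} {g h : Raag Γ}
    (e : g⁻¹ * raagGen Γ u * g = h⁻¹ * raagGen Γ v * h) : u = v := by
  let ab := raagLift Γ (fun w => Multiplicative.ofAdd (Finsupp.single w (1 : ℤ)))
    fun _ _ _ => Commute.all _ _
  have he := congrArg ab e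
  simp only [map_mul, map_inv, raagLift_raagGen, ab, inv_mul_cancel_comm] at he
  exact Finsupp.single_left_injective one_ne_zero (Multiplicative.ofAdd.injective he)

lemma not_commute_conj_swap_finRotate (g h : Equiv.Perm (Fin 3)) :
    ¬ Commute (g⁻¹ * Equiv.swap 0 1 * g) (h⁻¹ * finRotate 3 * h) := by
  revert g h; unfold Commute SemiconjBy; decide

lemma adj_of_commute_conj_raagGen {u v : V} (huv : u ≠ v) {g h : Raag Γ}
    (hc : Commute (g⁻¹ * raagGen Γ u * g) (h⁻¹ * raagGen Γ v * h)) : Γ.Adj u v := by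
  classical
  by_contra hnadj
  let f : V → Equiv.Perm (Fin 3) :=
    fun w => if w = u then Equiv.swap 0 1 else if w = v then finRotate 3 else 1
  have hf : ∀ a b, Γ.Adj a b → Commute (f a) (f b) := by
    intro a b hab
    simp only [f]
    split_ifs <;> subst_vars <;> simp_all [SimpleGraph.adj_comm]
  have := hc.map (raagLift Γ f hf)
  simp only [map_mul, map_inv, raagLift_raagGen, f, if_pos, if_neg huv.symm] at this
  exact not_commute_conj_swap_finRotate _ _ this

end Raag

section ExtensionGraph

variable {V : Type*} (Γ : SimpleGraph V)

def conjVert (v : V) (g : Raag Γ) : extVerts Γ := ⟨g⁻¹ * raagGen Γ v * g, v, g, rfl⟩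

lemma conjVert_one (v : V) : conjVert Γ v 1 = ⟨raagGen Γ v, v, 1, by simp⟩ := by
  ext; simp [conjVert]

lemma conjVert_mul_left_self (s : V) (g : Raag Γ) :
    conjVert Γ s (raagGen Γ s * g) = conjVert Γ s g := by
  ext; simp [conjVert, mul_assoc]

lemma conjVert_inv_mul_left_self (s : V) (g : Raag Γ) :
    conjVert Γ s ((raagGen Γ s)⁻¹ * g) = conjVert Γ s g := by
  ext; simp [conjVert, mul_assoc]

def conjVertHom (g : Raag Γ) : Γ →g extGraph Γ where
  toFun v := conjVert Γ v g
  map_rel' {v w} hvw := by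
    refine ⟨fun e => Γ.ne_of_adj hvw (eq_of_conj_raagGen_eq Γ (congrArg Subtype.val e)), ?_⟩
    simpa [conjVert, MulAut.conj_apply] using (raagGen_commute Γ hvw).map (MulAut.conj g⁻¹)

noncomputable def extLabel (a : extVerts Γ) : V := a.2.choose

lemma extLabel_spec (a : extVerts Γ) :
    ∃ g : Raag Γ, (a : Raag Γ) = g⁻¹ * raagGen Γ (extLabel Γ a) * g :=
  a.2.choose_spec

@[simp]
lemma extLabel_conjVert (v : V) (g : Raag Γ) : extLabel Γ (conjVert Γ v g) = v := by
  obtain ⟨k, hk⟩ := extLabel_spec Γ (conjVert Γ v g)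
  exact (eq_of_conj_raagGen_eq Γ hk).symm

lemma extLabel_eq_or_adj {a b : extVerts Γ} (h : (extGraph Γ).Adj a b) :
    extLabel Γ a = extLabel Γ b ∨ Γ.Adj (extLabel Γ a) (extLabel Γ b) := by
  refine or_iff_not_imp_left.mpr fun hne => ?_
  obtain ⟨g, hg⟩ := extLabel_spec Γ a
  obtain ⟨k, hk⟩ := extLabel_spec Γ b
  exact adj_of_commute_conj_raagGen Γ hne (hg ▸ hk ▸ h.2)

lemma conjVert_reachable (hconn : Γ.Connected) (g : Raag Γ) (v w : V) :
    (extGraph Γ).Reachable (conjVert Γ v g) (conjVert Γ w 1) := by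
  have hgen : g ∈ Subgroup.closure (Set.range (raagGen Γ)) := by
    rw [show raagGen Γ = PresentedGroup.of from rfl, PresentedGroup.closure_range_of]
    exact Subgroup.mem_top g
  induction hgen using Subgroup.closure_induction_left generalizing v with
  | one => exact (hconn v w).map (conjVertHom Γ 1)
  | mul_left _ hs g _ ih =>
    obtain ⟨s, rfl⟩ := hs
    have hvs : (extGraph Γ).Reachable (conjVert Γ v (raagGen Γ s * g))
        (conjVert Γ s (raagGen Γ s * g)) :=
      (hconn v s).map (conjVertHom Γ _)
    rw [conjVert_mul_left_self] at hvs
    exact hvs.trans (ih s)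
  | inv_mul_cancel _ hs g _ ih =>
    obtain ⟨s, rfl⟩ := hs
    have hvs : (extGraph Γ).Reachable (conjVert Γ v ((raagGen Γ s)⁻¹ * g))
        (conjVert Γ s ((raagGen Γ s)⁻¹ * g)) :=
      (hconn v s).map (conjVertHom Γ _)
    rw [conjVert_inv_mul_left_self] at hvs
    exact hvs.trans (ih s)

lemma extGraph_preconnected (hconn : Γ.Connected) : (extGraph Γ).Preconnected := by
  rintro ⟨_, v, g, rfl⟩ ⟨_, w, h, rfl⟩
  exact (conjVert_reachable Γ hconn g v w).trans (conjVert_reachable Γ hconn h w w).symm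

end ExtensionGraph

/-- For a finite connected graph `Γ` viewed inside its extension graph `Γ^e`, the distance in `Γ`
between vertices `x` and `y` is at most the distance in `Γ^e` between any conjugates `x^g` and
`y^h`; in particular distances within `Γ ⊆ Γ^e` agree with those of `Γ`, so a geodesic lying in
`Γ` is a geodesic of `Γ^e`. -/
theorem stmt17 {V : Type*} (Γ : SimpleGraph V) (hconn : Γ.Connected)
    (x y : V) (g h : Raag Γ) :
    Γ.dist x y ≤
        (extGraph Γ).dist ⟨g⁻¹ * raagGen Γ x * g, ⟨x, g, rfl⟩⟩
          ⟨h⁻¹ * raagGen Γ y * h, ⟨y, h, rfl⟩⟩ ∧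
      Γ.dist x y =
        (extGraph Γ).dist ⟨raagGen Γ x, ⟨x, 1, by simp⟩⟩ ⟨raagGen Γ y, ⟨y, 1, by simp⟩⟩ := by
  have hlower : ∀ g h : Raag Γ,
      Γ.dist x y ≤ (extGraph Γ).dist (conjVert Γ x g) (conjVert Γ y h) := fun g h => by
    simpa using SimpleGraph.dist_map_le_of_eq_or_adj (fun _ _ => extLabel_eq_or_adj Γ)
      (extGraph_preconnected Γ hconn (conjVert Γ x g) (conjVert Γ y h))
  have hupper : (extGraph Γ).dist (conjVert Γ x 1) (conjVert Γ y 1) ≤ Γ.dist x y :=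
    SimpleGraph.dist_map_le_of_eq_or_adj (fun _ _ hab => .inr ((conjVertHom Γ 1).map_adj hab))
      (hconn x y)
  rw [← conjVert_one, ← conjVert_one]
  exact ⟨hlower g h, le_antisymm (hlower 1 1) hupper⟩
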